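/- Let a ∈ ℂ[X] be a polynomial of degree at most 4 satisfying: λ⁴·conj(a(1/conj(λ))) = a(λ) for all λ ≠ 0; the coefficient of X⁴ in a has absolute value 1; λ^{−2}·a(λ) is a nonnegative real number for every λ with |λ| = 1; and a has a repeated root. Then a has degree exactly 4, a(0) ≠ 0, and exactly one of the following holds: (1) a = c·(X − λ₁)²·(X − λ₂)² for some c ∈ ℂ and λ₁, λ₂ ∈ ℂ with |λ₁| = |λ₂| = 1 (possibly λ₁ = λ₂); (2) a = c·(X − λ₁)²·(X − α)·(X − 1/conj(α)) for some c ∈ ℂ, λ₁ with |λ₁| = 1, and α with 0 < |α| < 1; (3) a = c·(X − α)²·(X − 1/conj(α))² for some c ∈ ℂ and α with 0 < |α| < 1. -/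

import Mathlib

/-! The reality condition says that `a` coincides with its conjugate reflection
`X⁴ · conj (a (1 / conj X))`. Comparing constant terms gives `a 0 = conj (a₄) ≠ 0`, so all four
roots are nonzero, and comparing factorisations shows that `λ ↦ 1 / conj λ` permutes the roots
with their multiplicities. At a root `z` of multiplicity `m` on the unit circle, parametrise the
circle by `λ = z e^{2it}`: since `λ - z = sin t · 2i z e^{it}`, the nonnegative quantity
`a(λ) / λ²` equals `sin(t)^m` times a continuous function not vanishing at `t = 0`, which forces
`m` to be even. A double root together with these two constraints leaves only the three
configurations, which are distinguished by how many roots lie on the unit circle. -/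

open Polynomial Complex ComplexConjugate Filter Topology
open scoped ComplexOrder

lemma Polynomial.eq_of_eval_eq_of_ne_zero {R : Type*} [CommRing R] [IsDomain R] [Infinite R]
    {p q : R[X]} (h : ∀ x ≠ 0, p.eval x = q.eval x) : p = q :=
  eq_of_infinite_eval_eq p q ((Set.finite_singleton 0).infinite_compl.mono fun x hx => h x hx)

noncomputable def circleInv (w : ℂ) : ℂ := (conj w)⁻¹

lemma circleInv_circleInv (w : ℂ) : circleInv (circleInv w) = w := by
  simp [circleInv]

lemma circleInv_injective : Function.Injective circleInv :=
  Function.LeftInverse.injective circleInv_circleInv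

lemma norm_circleInv (w : ℂ) : ‖circleInv w‖ = ‖w‖⁻¹ := by
  simp [circleInv]

lemma norm_circleInv_ne_one {w : ℂ} (hw : ‖w‖ ≠ 1) : ‖circleInv w‖ ≠ 1 := by
  rwa [norm_circleInv, inv_ne_one]

lemma circleInv_ne_self {w : ℂ} (hw0 : w ≠ 0) (hw : ‖w‖ ≠ 1) : circleInv w ≠ w := by
  intro h
  have h' : ‖w‖⁻¹ = ‖w‖ := by rw [← norm_circleInv, h]
  have h1 := mul_inv_cancel₀ (norm_ne_zero_iff.2 hw0)
  rw [h'] at h1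
  exact hw ((mul_self_eq_one_iff.mp h1).resolve_right (by linarith [norm_nonneg w]))

lemma mul_conj_circleInv_sub {x r : ℂ} (hx : x ≠ 0) (hr : r ≠ 0) :
    x * conj (circleInv x - r) = -conj r * (x - circleInv r) := by
  have : conj r ≠ 0 := by simpa using hr
  simp only [circleInv, map_sub, map_inv₀, conj_conj]
  field_simp
  ring

def SelfInversive (n : ℕ) (a : ℂ[X]) : Prop :=
  ∀ l : ℂ, l ≠ 0 → l ^ n * conj (a.eval (circleInv l)) = a.eval l

namespace SelfInversive

variable {n : ℕ} {a : ℂ[X]}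

lemma reflect_map_conj (h : SelfInversive n a) (hdeg : a.natDegree ≤ n) :
    reflect n (a.map (starRingEnd ℂ)) = a := by
  refine eq_of_eval_eq_of_ne_zero fun x hx => ?_
  let := invertibleOfNonzero (inv_ne_zero hx)
  have := eval₂_reflect_mul_pow (RingHom.id ℂ) x⁻¹ n (a.map (starRingEnd ℂ)) (by simpa using hdeg)
  rw [eval₂_map, RingHom.id_comp, invOf_eq_inv, inv_inv, inv_pow,
    show x⁻¹ = conj (circleInv x) by simp [circleInv], eval₂_hom] at this
  rw [← h x hx, ← this, eval₂_id]
  field_simp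

lemma coeff_zero_eq_conj_coeff (h : SelfInversive n a) (hdeg : a.natDegree ≤ n) :
    a.coeff 0 = conj (a.coeff n) := by
  conv_lhs => rw [← h.reflect_map_conj hdeg]
  rw [coeff_reflect, revAt_zero, coeff_map]

lemma roots_map_circleInv (h : SelfInversive n a) (hdeg : a.natDegree = n) (h0 : a.eval 0 ≠ 0) :
    a.roots.map circleInv = a.roots := by
  have ha : a ≠ 0 := by rintro rfl; simp at h0
  have hM0 : ∀ r ∈ a.roots, r ≠ 0 := by rintro r hr rfl; exact h0 ((mem_roots ha).1 hr)
  set k := conj a.leadingCoeff * (a.roots.map fun r => -conj r).prod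
  have hk : k ≠ 0 := mul_ne_zero (by simpa using ha) <| Multiset.prod_ne_zero fun hmem => by
    obtain ⟨r, hr, hr0⟩ := Multiset.mem_map.mp hmem
    exact hM0 r hr (by simpa using hr0)
  have key : C k * ((a.roots.map circleInv).map fun r => X - C r).prod = a := by
    refine eq_of_eval_eq_of_ne_zero fun x hx => ?_
    rw [← h x hx, (IsAlgClosed.splits a).eval_eq_prod_roots]
    simp only [eval_mul, eval_C, eval_multiset_prod, Multiset.map_map, Function.comp_def, eval_sub,
      eval_X, map_mul, map_multiset_prod]
    rw [← hdeg, ← IsAlgClosed.card_roots_eq_natDegree, ← Multiset.prod_replicate,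
      ← Multiset.map_const', mul_left_comm, ← Multiset.prod_map_mul,
      Multiset.map_congr rfl fun r hr => mul_conj_circleInv_sub hx (hM0 r hr),
      Multiset.prod_map_mul, ← mul_assoc]
  rw [← roots_multiset_prod_X_sub_C (a.roots.map circleInv), ← roots_C_mul _ hk, key]

lemma count_roots_circleInv (h : SelfInversive n a) (hdeg : a.natDegree = n) (h0 : a.eval 0 ≠ 0)
    (w : ℂ) : a.roots.count (circleInv w) = a.roots.count w := by
  conv_lhs => rw [← h.roots_map_circleInv hdeg h0]
  exact Multiset.count_map_eq_count' _ _ circleInv_injective w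

end SelfInversive

lemma even_of_sin_pow_mul_nonneg {G : ℝ → ℂ} {m : ℕ} (hG : ContinuousAt G 0) (hG0 : G 0 ≠ 0)
    (h : ∀ t : ℝ, 0 ≤ (Real.sin t : ℂ) ^ m * G t) : Even m := by
  by_contra hm
  rw [Nat.not_even_iff_odd] at hm
  have hright : ∀ᶠ t in 𝓝[>] 0, 0 ≤ G t := by
    filter_upwards [Ioo_mem_nhdsGT Real.pi_pos] with t ht
    have hs : (0 : ℂ) < (Real.sin t : ℂ) ^ m := by
      exact_mod_cast pow_pos (Real.sin_pos_of_pos_of_lt_pi ht.1 ht.2) m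
    have := mul_nonneg (inv_nonneg.2 hs.le) (h t)
    rwa [inv_mul_cancel_left₀ hs.ne'] at this
  have hleft : ∀ᶠ t in 𝓝[<] 0, G t ≤ 0 := by
    filter_upwards [Ioo_mem_nhdsLT (neg_lt_zero.2 Real.pi_pos)] with t ht
    have hs : (0 : ℂ) < -(Real.sin t : ℂ) ^ m := by
      exact_mod_cast neg_pos.2 (hm.pow_neg (Real.sin_neg_of_neg_of_neg_pi_lt ht.2 ht.1))
    have := mul_nonneg (inv_nonneg.2 hs.le) (h t)
    rwa [inv_neg, neg_mul, inv_mul_cancel_left₀ (neg_ne_zero.1 hs.ne'), neg_nonneg] at this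
  exact hG0 (le_antisymm (le_of_tendsto (hG.tendsto.mono_left nhdsWithin_le_nhds) hleft)
    (ge_of_tendsto (hG.tendsto.mono_left nhdsWithin_le_nhds) hright))

lemma mul_exp_two_mul_I_sub_self (z : ℂ) (t : ℝ) :
    z * exp (2 * t * I) - z = Real.sin t * (2 * I * z * exp (t * I)) := by
  rw [ofReal_sin, sin, show 2 * (t : ℂ) * I = t * I + t * I by ring, exp_add, neg_mul, exp_neg]
  field_simp
  linear_combination (z * exp (t * I) ^ 2 - z) * I_sq

lemma even_rootMultiplicity_of_nonneg_on_circle {p : ℂ[X]} (hp : p ≠ 0) {n : ℕ}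
    (h : ∀ l : ℂ, ‖l‖ = 1 → 0 ≤ p.eval l / l ^ n) {z : ℂ} (hz : ‖z‖ = 1) :
    Even (rootMultiplicity z p) := by
  set m := rootMultiplicity z p
  set g := p /ₘ (X - C z) ^ m
  have hfac : (X - C z) ^ m * g = p := pow_mul_divByMonic_rootMultiplicity_eq p z
  have hgz : g.eval z ≠ 0 := eval_divByMonic_pow_rootMultiplicity_ne_zero z hp
  have hz0 : z ≠ 0 := norm_ne_zero_iff.mp (by simp [hz])
  set w : ℝ → ℂ := fun t => z * exp (2 * t * I)
  refine even_of_sin_pow_mul_nonneg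
    (G := fun t => (2 * I * z * exp (t * I)) ^ m * g.eval (w t) / w t ^ n) ?_ ?_ fun t => ?_
  · exact ContinuousAt.div (by fun_prop) (by fun_prop) (by simp [w, hz0])
  · simp [w, hz0, hgz]
  · have hw : ‖w t‖ = 1 := by simp [w, hz, norm_exp]
    convert h (w t) hw using 1
    rw [← hfac, eval_mul, eval_pow, eval_sub, eval_X, eval_C, mul_exp_two_mul_I_sub_self]
    ring

lemma Multiset.exists_eq_cons_cons_pair {α : Type*} [DecidableEq α] {M : Multiset α} {z : α}
    (hcard : M.card = 4) (hz : 2 ≤ M.count z) : ∃ u v, M = z ::ₘ z ::ₘ {u, v} := by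
  obtain ⟨N, rfl⟩ := Multiset.le_iff_exists_add.mp (Multiset.le_count_iff_replicate_le.mp hz)
  obtain ⟨u, v, rfl⟩ := Multiset.card_eq_two.mp (by simpa using hcard)
  exact ⟨u, v, by
    simp only [Multiset.replicate_succ, Multiset.replicate_zero, Multiset.cons_add, zero_add]⟩

lemma Multiset.eq_and_eq_of_two_le_count_pair {α : Type*} [DecidableEq α] {u v x : α}
    (h : 2 ≤ ({u, v} : Multiset α).count x) : u = x ∧ v = x := by
  simp only [Multiset.insert_eq_cons, Multiset.count_cons, Multiset.count_singleton] at h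
  split_ifs at h <;> simp_all

lemma trichotomy_of_count_circleInv {M : Multiset ℂ} (hcard : M.card = 4) (h0 : 0 ∉ M)
    (hsymm : ∀ w, M.count (circleInv w) = M.count w) (heven : ∀ w, ‖w‖ = 1 → Even (M.count w))
    {z : ℂ} (hz : 2 ≤ M.count z) :
    (∃ l₁ l₂, ‖l₁‖ = 1 ∧ ‖l₂‖ = 1 ∧ M = {l₁, l₁, l₂, l₂}) ∨
    (∃ l w, ‖l‖ = 1 ∧ w ≠ 0 ∧ ‖w‖ ≠ 1 ∧ M = {l, l, w, circleInv w}) ∨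
    (∃ w, w ≠ 0 ∧ ‖w‖ ≠ 1 ∧ M = {w, w, circleInv w, circleInv w}) := by
  obtain ⟨u, v, rfl⟩ := Multiset.exists_eq_cons_cons_pair hcard hz
  have hne0 : ∀ w ∈ z ::ₘ z ::ₘ {u, v}, w ≠ 0 := fun w hw hw0 => h0 (hw0 ▸ hw)
  by_cases hz1 : ‖z‖ = 1
  · by_cases hu1 : ‖u‖ = 1
    · left
      obtain rfl : v = u := by
        by_contra hvu
        have := heven u hu1
        simp only [Multiset.insert_eq_cons, Multiset.count_cons, Multiset.count_singleton,
          if_neg (Ne.symm hvu)] at this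
        split_ifs at this <;> simp_all [Nat.even_iff]
      exact ⟨z, v, hz1, hu1, rfl⟩
    · right; left
      have hu0 : u ≠ 0 := hne0 u (by simp)
      have hmem : circleInv u ∈ z ::ₘ z ::ₘ {u, v} := by
        rw [← Multiset.count_pos, hsymm]; exact Multiset.count_pos.2 (by simp)
      have hz' : circleInv u ≠ z := fun h => norm_circleInv_ne_one hu1 (h ▸ hz1)
      have hv : circleInv u = v := by simpa [hz', circleInv_ne_self hu0 hu1] using hmem
      exact ⟨z, u, hz1, hu0, hu1, by rw [hv]; rfl⟩
  · right; right
    have hz0 : z ≠ 0 := hne0 z (by simp)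
    have hcount := hsymm z ▸ hz
    simp only [Multiset.count_cons, if_neg (circleInv_ne_self hz0 hz1), add_zero] at hcount
    obtain ⟨rfl, rfl⟩ := Multiset.eq_and_eq_of_two_le_count_pair hcount
    exact ⟨z, hz0, hz1, rfl⟩

lemma prod_map_X_sub_C_quadruple {R : Type*} [CommRing R] (x y u v : R) :
    (({x, y, u, v} : Multiset R).map fun r => X - C r).prod =
      (X - C x) * (X - C y) * (X - C u) * (X - C v) := by
  simp [mul_assoc]

lemma exists_norm_lt_one_mul_eq {w : ℂ} (hw0 : w ≠ 0) (hw1 : ‖w‖ ≠ 1) :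
    ∃ α : ℂ, 0 < ‖α‖ ∧ ‖α‖ < 1 ∧
      (X - C w) * (X - C (circleInv w)) = (X - C α) * (X - C (circleInv α)) := by
  rcases hw1.lt_or_gt with hlt | hgt
  · exact ⟨w, norm_pos_iff.2 hw0, hlt, rfl⟩
  · refine ⟨circleInv w, ?_, ?_, by rw [circleInv_circleInv, mul_comm]⟩
    · rw [norm_circleInv]; positivity
    · rw [norm_circleInv]; exact inv_lt_one_of_one_lt₀ hgt

lemma eq_or_eq_of_eval_eq_zero {R : Type*} [CommRing R] [IsDomain R] {a : R[X]} {c u v x : R}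
    (ha : a ≠ 0) (h : a = C c * (X - C u) ^ 2 * (X - C v) ^ 2) (hx : a.eval x = 0) :
    x = u ∨ x = v := by
  have hc : c ≠ 0 := by rintro rfl; simp [h] at ha
  simpa [h, hc, sub_eq_zero] using hx

def TwoDoubleRootsOnCircle (a : ℂ[X]) : Prop :=
  ∃ c l₁ l₂ : ℂ, ‖l₁‖ = 1 ∧ ‖l₂‖ = 1 ∧ a = C c * (X - C l₁) ^ 2 * (X - C l₂) ^ 2

def DoubleRootOnCircleAndPair (a : ℂ[X]) : Prop :=
  ∃ c l₁ α : ℂ, ‖l₁‖ = 1 ∧ 0 < ‖α‖ ∧ ‖α‖ < 1 ∧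
    a = C c * (X - C l₁) ^ 2 * (X - C α) * (X - C (circleInv α))

def TwoDoubleRootsOffCircle (a : ℂ[X]) : Prop :=
  ∃ c α : ℂ, 0 < ‖α‖ ∧ ‖α‖ < 1 ∧ a = C c * (X - C α) ^ 2 * (X - C (circleInv α)) ^ 2

section

variable {a : ℂ[X]}

lemma TwoDoubleRootsOnCircle.not_doubleRootOnCircleAndPair (ha : a ≠ 0)
    (h : TwoDoubleRootsOnCircle a) : ¬DoubleRootOnCircleAndPair a := by
  obtain ⟨c, l₁, l₂, hl₁, hl₂, hshape⟩ := h
  rintro ⟨c', l, α, -, -, hα, hshape'⟩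
  rcases eq_or_eq_of_eval_eq_zero (x := α) ha hshape (by rw [hshape']; simp) with rfl | rfl
  · exact hα.ne hl₁
  · exact hα.ne hl₂

lemma TwoDoubleRootsOnCircle.not_twoDoubleRootsOffCircle (ha : a ≠ 0)
    (h : TwoDoubleRootsOnCircle a) : ¬TwoDoubleRootsOffCircle a := by
  obtain ⟨c, l₁, l₂, hl₁, hl₂, hshape⟩ := h
  rintro ⟨c', α, -, hα, hshape'⟩
  rcases eq_or_eq_of_eval_eq_zero (x := α) ha hshape (by rw [hshape']; simp) with rfl | rfl
  · exact hα.ne hl₁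
  · exact hα.ne hl₂

lemma DoubleRootOnCircleAndPair.not_twoDoubleRootsOffCircle (ha : a ≠ 0)
    (h : DoubleRootOnCircleAndPair a) : ¬TwoDoubleRootsOffCircle a := by
  obtain ⟨c, l, β, hl, -, -, hshape⟩ := h
  rintro ⟨c', α, -, hα, hshape'⟩
  rcases eq_or_eq_of_eval_eq_zero (x := l) ha hshape' (by rw [hshape]; simp) with rfl | rfl
  · exact hα.ne hl
  · exact norm_circleInv_ne_one hα.ne hl

lemma SelfInversive.degenerate_trichotomy (h : SelfInversive 4 a) (hdeg : a.natDegree = 4)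
    (h0 : a.eval 0 ≠ 0)
    (hpos : ∀ l : ℂ, ‖l‖ = 1 → 0 ≤ a.eval l / l ^ 2) (hrep : ∃ z, 2 ≤ rootMultiplicity z a) :
    TwoDoubleRootsOnCircle a ∨ DoubleRootOnCircleAndPair a ∨ TwoDoubleRootsOffCircle a := by
  have ha : a ≠ 0 := by rintro rfl; simp at h0
  obtain ⟨z, hz⟩ := hrep
  have hsplit := (IsAlgClosed.splits a).eq_prod_roots
  rcases trichotomy_of_count_circleInv (M := a.roots)
      (by rw [IsAlgClosed.card_roots_eq_natDegree, hdeg]) (fun h0' => h0 ((mem_roots ha).1 h0'))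
      (h.count_roots_circleInv hdeg h0)
      (fun w hw => count_roots a ▸ even_rootMultiplicity_of_nonneg_on_circle ha hpos hw)
      (count_roots a ▸ hz) with
    ⟨l₁, l₂, hl₁, hl₂, hM⟩ | ⟨l, w, hl, hw0, hw1, hM⟩ | ⟨w, hw0, hw1, hM⟩ <;>
    rw [hM, prod_map_X_sub_C_quadruple] at hsplit
  · exact Or.inl ⟨_, l₁, l₂, hl₁, hl₂, by rw [hsplit]; ring⟩
  · obtain ⟨α, hα0, hα1, hpair⟩ := exists_norm_lt_one_mul_eq hw0 hw1
    exact Or.inr <| Or.inl ⟨_, l, α, hl, hα0, hα1, by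
      rw [hsplit]; linear_combination (C a.leadingCoeff * (X - C l) ^ 2) * hpair⟩
  · obtain ⟨α, hα0, hα1, hpair⟩ := exists_norm_lt_one_mul_eq hw0 hw1
    exact Or.inr <| Or.inr ⟨_, α, hα0, hα1, by
      rw [hsplit]
      linear_combination (C a.leadingCoeff * ((X - C w) * (X - C (circleInv w)) +
        (X - C α) * (X - C (circleInv α)))) * hpair⟩

end

theorem stmt_15 (a : ℂ[X]) (hdeg : a.degree ≤ 4)
    (hreal : ∀ l : ℂ, l ≠ 0 →
      l ^ 4 * (starRingEnd ℂ) (a.eval ((starRingEnd ℂ) l)⁻¹) = a.eval l)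
    (hnorm : ‖a.coeff 4‖ = 1)
    (hpos : ∀ l : ℂ, ‖l‖ = 1 →
      ∃ r : ℝ, 0 ≤ r ∧ a.eval l = (r : ℂ) * l ^ 2)
    (hrep : ∃ z : ℂ, 2 ≤ rootMultiplicity z a) :
    a.degree = 4 ∧ a.eval 0 ≠ 0 ∧
    (let P1 : Prop := ∃ c l₁ l₂ : ℂ, ‖l₁‖ = 1 ∧ ‖l₂‖ = 1 ∧
        a = C c * (X - C l₁) ^ 2 * (X - C l₂) ^ 2
     let P2 : Prop := ∃ c l₁ α : ℂ, ‖l₁‖ = 1 ∧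
        0 < ‖α‖ ∧ ‖α‖ < 1 ∧
        a = C c * (X - C l₁) ^ 2 * (X - C α) * (X - C ((starRingEnd ℂ) α)⁻¹)
     let P3 : Prop := ∃ c α : ℂ, 0 < ‖α‖ ∧ ‖α‖ < 1 ∧
        a = C c * (X - C α) ^ 2 * (X - C ((starRingEnd ℂ) α)⁻¹) ^ 2
     (P1 ∧ ¬P2 ∧ ¬P3) ∨ (¬P1 ∧ P2 ∧ ¬P3) ∨ (¬P1 ∧ ¬P2 ∧ P3)) := by
  have ha4 : a.coeff 4 ≠ 0 := by rintro h; simp [h] at hnorm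
  have ha : a ≠ 0 := by rintro rfl; simp at ha4
  have hdeg4 : a.natDegree = 4 :=
    natDegree_eq_of_le_of_coeff_ne_zero (natDegree_le_of_degree_le hdeg) ha4
  have h0 : a.eval 0 ≠ 0 := by
    rw [← coeff_zero_eq_eval_zero, SelfInversive.coeff_zero_eq_conj_coeff hreal hdeg4.le]
    simpa using ha4
  have hnonneg : ∀ l : ℂ, ‖l‖ = 1 → 0 ≤ a.eval l / l ^ 2 := fun l hl => by
    obtain ⟨r, hr, hl'⟩ := hpos l hl
    rw [hl', mul_div_cancel_right₀ _ (pow_ne_zero 2 (norm_ne_zero_iff.1 (by simp [hl])))]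
    exact_mod_cast hr
  refine ⟨(degree_eq_iff_natDegree_eq ha).2 hdeg4, h0, ?_⟩
  show (TwoDoubleRootsOnCircle a ∧ ¬DoubleRootOnCircleAndPair a ∧ ¬TwoDoubleRootsOffCircle a) ∨
    (¬TwoDoubleRootsOnCircle a ∧ DoubleRootOnCircleAndPair a ∧ ¬TwoDoubleRootsOffCircle a) ∨
    (¬TwoDoubleRootsOnCircle a ∧ ¬DoubleRootOnCircleAndPair a ∧ TwoDoubleRootsOffCircle a)
  have h12 := TwoDoubleRootsOnCircle.not_doubleRootOnCircleAndPair ha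
  have h13 := TwoDoubleRootsOnCircle.not_twoDoubleRootsOffCircle ha
  have h23 := DoubleRootOnCircleAndPair.not_twoDoubleRootsOffCircle ha
  have := SelfInversive.degenerate_trichotomy hreal hdeg4 h0 hnonneg hrep
  tauto
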